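/- (Normal cone intersection rule.) Let X be a real vector space and Ω₁, …, Ω_m (m ≥ 2) convex subsets of X satisfying the qualification condition ⋂_{i=1}^m core(Ω_i) ≠ ∅. Then for every x̄ ∈ ⋂_{i=1}^m Ω_i, N(x̄; ⋂_{i=1}^m Ω_i) = Σ_{i=1}^m N(x̄; Ω_i), where the right-hand side is the set of all sums f₁ + … + f_m with f_i ∈ N(x̄; Ω_i). -/

import Mathlib

/-- The algebraic core of a set `Ω` in a real vector space. -/
def algCore {X : Type*} [AddCommGroup X] [Module ℝ X] (Ω : Set X) : Set X :=
  {x | x ∈ Ω ∧ ∀ v : X, ∃ δ > (0 : ℝ), ∀ t : ℝ, |t| < δ → x + t • v ∈ Ω}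

/-- The normal cone to a set `Ω` at `xb`, empty (by convention) if `xb ∉ Ω`. -/
def normalCone {X : Type*} [AddCommGroup X] [Module ℝ X] (Ω : Set X) (xb : X) :
    Set (X →ₗ[ℝ] ℝ) :=
  {f | xb ∈ Ω ∧ ∀ x ∈ Ω, f (x - xb) ≤ 0}

/-!
By induction on the number of sets it suffices to split `f ∈ N(x̄; A ∩ B)` as `g + (f - g)`
with `g ∈ N(x̄; A)` and `f - g ∈ N(x̄; B)`. Such a `g` is a non-vertical supporting hyperplane
of the convex set `{(a - b, f (b - x̄)) | a ∈ A, b ∈ B} ⊆ X × ℝ`, which the M. Riesz extension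
theorem provides: `f ≤ 0` on `A ∩ B - x̄` keeps the set below the origin on the vertical axis, and
a point of `core A ∩ B` makes the cone it generates meet every vertical line.
-/

open Set Pointwise

section NormalCone

variable {X : Type*} [AddCommGroup X] [Module ℝ X]

theorem algCore_subset (Ω : Set X) : algCore Ω ⊆ Ω := fun _ hx => hx.1

theorem exists_pos_add_smul_mem_of_mem_algCore {Ω : Set X} {w : X} (hw : w ∈ algCore Ω)
    (v : X) : ∃ ε > (0 : ℝ), w + ε • v ∈ Ω := by
  obtain ⟨δ, hδ, hδv⟩ := hw.2 v
  exact ⟨δ / 2, by positivity, hδv _ (by rw [abs_of_pos (by positivity)]; linarith)⟩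

theorem normalCone_univ (xb : X) : normalCone univ xb = {0} := by
  ext f
  refine ⟨fun ⟨_, hf⟩ => LinearMap.ext fun v => le_antisymm ?_ ?_, ?_⟩
  · simpa using hf (v + xb) trivial
  · simpa using hf (-v + xb) trivial
  · rintro rfl
    exact ⟨trivial, fun _ _ => le_rfl⟩

theorem sum_mem_normalCone_iInter {ι : Type*} [Fintype ι] {Ω : ι → Set X} {xb : X}
    (hxb : xb ∈ ⋂ i, Ω i) {g : ι → X →ₗ[ℝ] ℝ} (hg : ∀ i, g i ∈ normalCone (Ω i) xb) :
    ∑ i, g i ∈ normalCone (⋂ i, Ω i) xb := by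
  refine ⟨hxb, fun x hx => ?_⟩
  rw [LinearMap.sum_apply]
  exact Finset.sum_nonpos fun i _ => (hg i).2 x (mem_iInter.mp hx i)

/- `-g` is the part on `X` of a Riesz extension of `(0, s) ↦ -s` from the vertical axis that is
nonnegative on the cone spanned by `D`. -/
theorem Convex.exists_linearMap_add_snd_nonpos {D : Set (X × ℝ)} (hD : Convex ℝ D)
    (h0 : (0 : X × ℝ) ∈ D) (hvert : ∀ s : ℝ, ((0 : X), s) ∈ D → s ≤ 0)
    (habs : ∀ x : X, ∃ c > (0 : ℝ), ∃ r : ℝ, (c • x, r) ∈ D) :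
    ∃ g : X →ₗ[ℝ] ℝ, ∀ p ∈ D, g p.1 + p.2 ≤ 0 := by
  let K : PointedCone ℝ (X × ℝ) :=
    (ConvexCone.hull ℝ D).toPointedCone (ConvexCone.subset_hull h0)
  have mem_K {p : X × ℝ} : p ∈ K ↔ ∃ c : ℝ, 0 < c ∧ ∃ y ∈ D, c • y = p := by
    change p ∈ ConvexCone.hull ℝ D ↔ _
    simp only [ConvexCone.mem_hull_of_convex hD, mem_smul_set]
  let φ : (X × ℝ) →ₗ.[ℝ] ℝ :=
    ⟨LinearMap.ker (LinearMap.fst ℝ X ℝ), -(LinearMap.snd ℝ X ℝ).comp (Submodule.subtype _)⟩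
  have nonneg : ∀ x : φ.domain, (x : X × ℝ) ∈ K → 0 ≤ φ x := by
    rintro ⟨⟨x, s⟩, hx : x = 0⟩ hK
    obtain ⟨c, hc, ⟨y, t⟩, hy, hcy⟩ := mem_K.1 hK
    obtain ⟨rfl, rfl⟩ := Prod.ext_iff.1 hcy
    obtain rfl : y = 0 := (smul_eq_zero.1 hx).resolve_left hc.ne'
    simpa [φ] using mul_nonpos_of_nonneg_of_nonpos hc.le (hvert t hy)
  have dense : ∀ p, ∃ x : φ.domain, (x : X × ℝ) + p ∈ K := by
    rintro ⟨x, s⟩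
    obtain ⟨c, hc, r, hr⟩ := habs x
    refine ⟨⟨(0, c⁻¹ * r - s), rfl⟩, mem_K.2 ⟨c⁻¹, inv_pos.2 hc, _, hr, ?_⟩⟩
    ext <;> simp [smul_smul, hc.ne']
  obtain ⟨G, hGφ, hGK⟩ := riesz_extension K φ nonneg dense
  have hGvert (s : ℝ) : G (0, s) = -s := by
    simpa [φ] using hGφ ⟨(0, s), rfl⟩
  refine ⟨-G.comp (LinearMap.inl ℝ X ℝ), fun p hp => ?_⟩
  have hGp : 0 ≤ G p := hGK p (mem_K.2 ⟨1, one_pos, p, hp, one_smul ℝ p⟩)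
  have hsplit : G p = G (p.1, 0) + G (0, p.2) := by rw [← map_add]; simp
  simp only [LinearMap.neg_apply, LinearMap.comp_apply, LinearMap.inl_apply]
  linarith [hGvert p.2]

theorem normalCone_inter_subset {A B : Set X} (hA : Convex ℝ A) (hB : Convex ℝ B)
    (hAB : (algCore A ∩ B).Nonempty) (xb : X) :
    normalCone (A ∩ B) xb ⊆ normalCone A xb + normalCone B xb := by
  rintro f ⟨⟨hxA, hxB⟩, hf⟩
  obtain ⟨w, hwA, hwB⟩ := hAB
  let D : Set (X × ℝ) := (fun p : X × X => (p.1 - p.2, f (p.2 - xb))) '' A ×ˢ B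
  have hD : Convex ℝ D := by
    rintro _ ⟨⟨a, b⟩, ⟨ha, hb⟩, rfl⟩ _ ⟨⟨a', b'⟩, ⟨ha', hb'⟩, rfl⟩ s t hs ht hst
    refine ⟨(s • a + t • a', s • b + t • b'), ⟨hA ha ha' hs ht hst, hB hb hb' hs ht hst⟩, ?_⟩
    have hshift : s • b + t • b' - xb = s • (b - xb) + t • (b' - xb) := by
      obtain rfl : t = 1 - s := by linarith
      module
    ext
    · simp only [Prod.fst_add, Prod.smul_fst]
      module
    · simp [hshift]
  obtain ⟨g, hg⟩ := hD.exists_linearMap_add_snd_nonpos ⟨(xb, xb), ⟨hxA, hxB⟩, by simp⟩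
    (by
      rintro s ⟨⟨a, b⟩, ⟨ha, hb⟩, hab⟩
      obtain ⟨hab, rfl⟩ := Prod.ext_iff.1 hab
      obtain rfl : a = b := sub_eq_zero.1 hab
      exact hf a ⟨ha, hb⟩)
    (fun x => by
      obtain ⟨ε, hε, hεx⟩ := exists_pos_add_smul_mem_of_mem_algCore hwA x
      exact ⟨ε, hε, f (w - xb), (w + ε • x, w), ⟨hεx, hwB⟩, by simp⟩)
  have hsupport (a : X) (ha : a ∈ A) (b : X) (hb : b ∈ B) : g (a - b) + f (b - xb) ≤ 0 :=
    hg _ ⟨(a, b), ⟨ha, hb⟩, rfl⟩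
  refine ⟨g, ⟨hxA, fun a ha => ?_⟩, f - g, ⟨hxB, fun b hb => ?_⟩, add_sub_cancel g f⟩
  · simpa using hsupport a ha xb hxB
  · have := hsupport xb hxA b hb
    rw [← neg_sub, map_neg] at this
    rw [LinearMap.sub_apply]
    linarith

theorem normalCone_iInter_subset {n : ℕ} (Ω : Fin n → Set X) (hconv : ∀ i, Convex ℝ (Ω i))
    (hqc : (⋂ i, algCore (Ω i)).Nonempty) (xb : X) :
    normalCone (⋂ i, Ω i) xb ⊆
      {f | ∃ g : Fin n → X →ₗ[ℝ] ℝ, (∀ i, g i ∈ normalCone (Ω i) xb) ∧ f = ∑ i, g i} := by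
  induction n with
  | zero =>
    rintro f hf
    rw [iInter_of_empty, normalCone_univ] at hf
    exact ⟨0, finZeroElim, by simpa using hf⟩
  | succ n ih =>
    obtain ⟨w, hw⟩ := hqc
    have hw' : ∀ i, w ∈ algCore (Ω i) := mem_iInter.mp hw
    have hsplit : ⋂ i, Ω i = Ω 0 ∩ ⋂ i : Fin n, Ω i.succ := by
      ext x
      simp [Fin.forall_fin_succ]
    rintro f hf
    rw [hsplit] at hf
    obtain ⟨g₀, hg₀, h, hh, rfl⟩ := normalCone_inter_subset (hconv 0)
      (convex_iInter fun i : Fin n => hconv i.succ)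
      ⟨w, hw' 0, mem_iInter.mpr fun i : Fin n => algCore_subset _ (hw' i.succ)⟩ xb hf
    obtain ⟨g, hg, rfl⟩ := ih (fun i : Fin n => Ω i.succ) (fun i => hconv i.succ)
      ⟨w, mem_iInter.mpr fun i : Fin n => hw' i.succ⟩ hh
    exact ⟨Fin.cons g₀ g, Fin.cases hg₀ hg, (Fin.sum_cons g₀ g).symm⟩

end NormalCone

theorem normal_cone_intersection_general {X : Type*} [AddCommGroup X] [Module ℝ X]
    (m : ℕ) (Ω : Fin m → Set X) (hconv : ∀ i, Convex ℝ (Ω i))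
    (hqc : (⋂ i, algCore (Ω i)).Nonempty) :
    ∀ xb ∈ ⋂ i, Ω i,
      normalCone (⋂ i, Ω i) xb
        = {f | ∃ g : Fin m → (X →ₗ[ℝ] ℝ), (∀ i, g i ∈ normalCone (Ω i) xb) ∧
            f = ∑ i, g i} := by
  intro xb hxb
  refine (normalCone_iInter_subset Ω hconv hqc xb).antisymm ?_
  rintro _ ⟨g, hg, rfl⟩
  exact sum_mem_normalCone_iInter hxb hg

theorem normal_cone_intersection {X : Type*} [AddCommGroup X] [Module ℝ X]
    (m : ℕ) (hm : 2 ≤ m) (Ω : Fin m → Set X) (hconv : ∀ i, Convex ℝ (Ω i))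
    (hqc : (⋂ i, algCore (Ω i)).Nonempty) :
    ∀ xb ∈ ⋂ i, Ω i,
      normalCone (⋂ i, Ω i) xb
        = {f | ∃ g : Fin m → (X →ₗ[ℝ] ℝ), (∀ i, g i ∈ normalCone (Ω i) xb) ∧
            f = ∑ i, g i} :=
  normal_cone_intersection_general m Ω hconv hqc
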